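/- In a budget-aggregation game with binary symmetric separable strictly convex utilities, the number of Nash equilibria is at most min(m!, prod over i of |A_i|). -/

import Mathlib

/-! A Nash equilibrium share `d` of an agent is a best response to the aggregate `t` of the
others. Moving all of the mass on `y` to another approved `x` must not pay, and since the
increments of a strictly convex function grow with the base point this forces
`t x + d x ≤ t y` whenever `d y > 0`. Applied in both directions it rules out a split support,
and strict monotonicity rules out mass outside the approved set, so every equilibrium is
`i ↦ (1/n) • 1_{f i}` with `f i` the strict maximiser of the aggregate on `A i`. There are at
most `∏ |A i|` such selections, and the permutation sorting the aggregate determines `f`,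
which gives the bound `m!`. -/

def IsStrategy (n m : ℕ) (d : Fin m → ℝ) : Prop :=
  (∀ x, 0 ≤ d x) ∧ ∑ x, d x = 1 / n

def IsNash (n m : ℕ) (u : Fin n → (Fin m → ℝ) → ℝ) (δ : Fin n → Fin m → ℝ) : Prop :=
  (∀ i, IsStrategy n m (δ i)) ∧
  ∀ i, ∀ d, IsStrategy n m d →
    u i ((∑ j, δ j) - δ i + d) ≤ u i (∑ j, δ j)

theorem StrictConvexOn.sub_lt_sub_of_lt {s : Set ℝ} {f : ℝ → ℝ} (hf : StrictConvexOn ℝ s f)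
    {a b c : ℝ} (ha : a ∈ s) (hbc : b + c ∈ s) (hab : a < b) (hc : 0 < c) :
    f (a + c) - f a < f (b + c) - f b := by
  -- `a + c` and `b` are the convex combinations of `a` and `b + c` with swapped weights.
  have hlen : 0 < b + c - a := by linarith
  set w := c / (b + c - a)
  have hw : 0 < w := div_pos hc hlen
  have hw' : 0 < 1 - w := by rw [sub_pos, div_lt_one hlen]; linarith
  have hac := hf.2 ha hbc (by linarith) hw' hw (sub_add_cancel 1 w)
  have hb := hf.2 ha hbc (by linarith) hw hw' (add_sub_cancel w 1)
  have e₁ : (1 - w) • a + w • (b + c) = a + c := by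
    simp only [smul_eq_mul, w]; field_simp; ring
  have e₂ : w • a + (1 - w) • (b + c) = b := by
    simp only [smul_eq_mul, w]; field_simp; ring
  rw [e₁, smul_eq_mul, smul_eq_mul] at hac
  rw [e₂, smul_eq_mul, smul_eq_mul] at hb
  linarith

section Transfer

variable {α M N : Type*} [DecidableEq α] [AddZeroClass M] [AddCommGroup N]

def transfer (d : α → M) (x y : α) : α → M :=
  Function.update (Function.update d y 0) x (d x + d y)

variable {d : α → M} {x y z : α}

theorem transfer_apply_left : transfer d x y x = d x + d y := by
  simp [transfer]

theorem transfer_apply_right (hxy : x ≠ y) : transfer d x y y = 0 := by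
  simp [transfer, hxy.symm]

theorem transfer_apply_of_ne (hzx : z ≠ x) (hzy : z ≠ y) : transfer d x y z = d z := by
  simp [transfer, hzx, hzy]

theorem sum_transfer_sub (A : Finset α) (φ : α → M → N) (hx : x ∈ A) (hxy : x ≠ y) :
    ∑ z ∈ A, (φ z (transfer d x y z) - φ z (d z)) =
      φ x (d x + d y) - φ x (d x) + if y ∈ A then φ y 0 - φ y (d y) else 0 := by
  have hoff : ∀ z ∈ A, z ≠ x ∧ z ≠ y → φ z (transfer d x y z) - φ z (d z) = 0 :=
    fun z _ hz => by rw [transfer_apply_of_ne hz.1 hz.2, sub_self]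
  split_ifs with hy
  · rw [Finset.sum_eq_add_of_mem x y hx hy hxy hoff, transfer_apply_left,
      transfer_apply_right hxy]
  · have hoff' z (hz : z ∈ A) (hzx : z ≠ x) := hoff z hz ⟨hzx, ne_of_mem_of_not_mem hz hy⟩
    rw [Finset.sum_eq_single_of_mem x hx hoff', transfer_apply_left, add_zero]

end Transfer

section Strategy

variable {n m : ℕ} {d : Fin m → ℝ}

theorem IsStrategy.apply_add_apply_le (hd : IsStrategy n m d) {x y : Fin m} (hxy : x ≠ y) :
    d x + d y ≤ 1 / n := by
  rw [← Finset.sum_pair hxy, ← hd.2]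
  exact Finset.sum_le_sum_of_subset_of_nonneg (Finset.subset_univ _) fun z _ _ => hd.1 z

theorem IsStrategy.apply_le (hd : IsStrategy n m d) (x : Fin m) : d x ≤ 1 / n :=
  hd.2 ▸ Finset.single_le_sum (fun z _ => hd.1 z) (Finset.mem_univ x)

theorem IsStrategy.transfer (hd : IsStrategy n m d) {x y : Fin m} (hxy : x ≠ y) :
    IsStrategy n m (transfer d x y) := by
  refine ⟨fun z => ?_, ?_⟩
  · by_cases hzx : z = x
    · rw [hzx, transfer_apply_left]; exact add_nonneg (hd.1 x) (hd.1 y)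
    by_cases hzy : z = y
    · rw [hzy, transfer_apply_right hxy]
    · rw [transfer_apply_of_ne hzx hzy]; exact hd.1 z
  · have := sum_transfer_sub Finset.univ (fun _ u => u) (d := d) (Finset.mem_univ x) hxy
    simp only [Finset.sum_sub_distrib, Finset.mem_univ, if_true] at this
    linarith [hd.2]

theorem IsStrategy.eq_single (hd : IsStrategy n m d) {a : Fin m} (ha : ∀ x, x ≠ a → d x = 0) :
    d = Pi.single a (1 / n : ℝ) := by
  have hda : d a = 1 / n := by
    rw [← hd.2, Finset.sum_eq_single a (fun x _ hx => ha x hx) (by simp)]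
  funext x
  by_cases hx : x = a
  · subst hx; simp [hda]
  · simp [hx, ha x hx]

end Strategy

def IsBestResponse (n m : ℕ) (u : (Fin m → ℝ) → ℝ) (t d : Fin m → ℝ) : Prop :=
  IsStrategy n m d ∧ ∀ d', IsStrategy n m d' → u (t + d') ≤ u (t + d)

theorem IsNash.isBestResponse {n m : ℕ} {u : Fin n → (Fin m → ℝ) → ℝ} {δ : Fin n → Fin m → ℝ}
    (h : IsNash n m u δ) (i : Fin n) : IsBestResponse n m (u i) (∑ j, δ j - δ i) (δ i) :=
  ⟨h.1 i, fun d hd => by simpa only [sub_add_cancel] using h.2 i d hd⟩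

namespace IsBestResponse

variable {n m : ℕ} {A : Finset (Fin m)} {G : ℝ → ℝ} {t d : Fin m → ℝ} {x y : Fin m}

theorem transfer_gain_nonpos (h : IsBestResponse n m (fun d => ∑ z ∈ A, G (d z)) t d)
    (hx : x ∈ A) (hxy : x ≠ y) :
    G (t x + d x + d y) - G (t x + d x) + (if y ∈ A then G (t y) - G (t y + d y) else 0) ≤ 0 := by
  have hle := h.2 _ (h.1.transfer hxy)
  have hsum := sum_transfer_sub A (fun z u => G (t z + u)) (d := d) hx hxy
  simp only [Finset.sum_sub_distrib, add_zero] at hsum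
  simp only [Pi.add_apply] at hle
  rw [add_assoc (t x)]
  linarith

theorem eq_zero_of_notMem (h : IsBestResponse n m (fun d => ∑ z ∈ A, G (d z)) t d)
    (hmono : StrictMonoOn G (Set.Icc 0 1)) (hA : A.Nonempty)
    (ht₀ : ∀ x, 0 ≤ t x) (ht₁ : ∀ x, t x + 1 / n ≤ 1) (hy : y ∉ A) : d y = 0 := by
  obtain ⟨x, hx⟩ := hA
  have hxy : x ≠ y := ne_of_mem_of_not_mem hx hy
  refine le_antisymm (not_lt.1 fun hpos => ?_) (h.1.1 y)
  have hgain := h.transfer_gain_nonpos hx hxy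
  rw [if_neg hy, add_zero, sub_nonpos] at hgain
  have hsum := h.1.apply_add_apply_le hxy
  refine (hmono ⟨?_, ?_⟩ ⟨?_, ?_⟩ (lt_add_of_pos_right _ hpos)).not_ge hgain <;>
    linarith [ht₀ x, ht₁ x, h.1.1 x]

theorem le_of_pos (h : IsBestResponse n m (fun d => ∑ z ∈ A, G (d z)) t d)
    (hconv : StrictConvexOn ℝ (Set.Icc 0 1) G) (ht₀ : ∀ x, 0 ≤ t x) (ht₁ : ∀ x, t x + 1 / n ≤ 1)
    (hx : x ∈ A) (hy : y ∈ A) (hxy : x ≠ y) (hpos : 0 < d y) : t x + d x ≤ t y := by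
  refine not_lt.1 fun hlt => ?_
  have hgain := h.transfer_gain_nonpos hx hxy
  rw [if_pos hy] at hgain
  have hsum := h.1.apply_add_apply_le hxy
  have := hconv.sub_lt_sub_of_lt ⟨ht₀ y, by linarith [ht₁ y, h.1.apply_le y]⟩
    ⟨by linarith [ht₀ x, h.1.1 x], by linarith [ht₁ x]⟩ hlt hpos
  linarith

theorem exists_eq_single (h : IsBestResponse n m (fun d => ∑ z ∈ A, G (d z)) t d) (hn : 0 < n)
    (hA : A.Nonempty) (hconv : StrictConvexOn ℝ (Set.Icc 0 1) G)
    (hmono : StrictMonoOn G (Set.Icc 0 1)) (ht₀ : ∀ x, 0 ≤ t x) (ht₁ : ∀ x, t x + 1 / n ≤ 1) :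
    ∃ a ∈ A, d = Pi.single a (1 / n : ℝ) ∧ ∀ b ∈ A, b ≠ a → (t + d) b < (t + d) a := by
  have hmem : ∀ y, 0 < d y → y ∈ A := fun y hy =>
    by_contra fun hyA => hy.ne' (h.eq_zero_of_notMem hmono hA ht₀ ht₁ hyA)
  obtain ⟨a, -, hpos⟩ : ∃ a ∈ Finset.univ, (0 : ℝ) < d a :=
    Finset.exists_lt_of_sum_lt (by simpa [h.1.2] using hn)
  have hzero : ∀ x, x ≠ a → d x = 0 := by
    intro x hxa
    refine le_antisymm (not_lt.1 fun hx => ?_) (h.1.1 x)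
    have hle_ax := h.le_of_pos hconv ht₀ ht₁ (hmem a hpos) (hmem x hx) (Ne.symm hxa) hx
    have hle_xa := h.le_of_pos hconv ht₀ ht₁ (hmem x hx) (hmem a hpos) hxa hpos
    linarith
  refine ⟨a, hmem a hpos, h.1.eq_single hzero, fun b hb hba => ?_⟩
  simp only [Pi.add_apply]
  linarith [h.le_of_pos hconv ht₀ ht₁ hb (hmem a hpos) hba hpos]

end IsBestResponse

section Profile

variable {n m : ℕ} {δ : Fin n → Fin m → ℝ}

theorem sum_sub_apply_eq_sum_erase (δ : Fin n → Fin m → ℝ) (i : Fin n) (x : Fin m) :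
    (∑ j, δ j - δ i) x = ∑ j ∈ Finset.univ.erase i, δ j x := by
  rw [Pi.sub_apply, Finset.sum_apply, ← Finset.sum_erase_add _ _ (Finset.mem_univ i),
    add_sub_cancel_right]

theorem sum_sub_apply_nonneg (hδ : ∀ j, IsStrategy n m (δ j)) (i : Fin n) (x : Fin m) :
    0 ≤ (∑ j, δ j - δ i) x := by
  rw [sum_sub_apply_eq_sum_erase]
  exact Finset.sum_nonneg fun j _ => (hδ j).1 x

theorem sum_sub_apply_add_le_one (hδ : ∀ j, IsStrategy n m (δ j)) (i : Fin n) (x : Fin m) :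
    (∑ j, δ j - δ i) x + 1 / n ≤ 1 := by
  have hn : (n : ℝ) ≠ 0 := Nat.cast_ne_zero.2 (Fin.pos i).ne'
  calc (∑ j, δ j - δ i) x + 1 / n = ∑ j ∈ Finset.univ.erase i, δ j x + 1 / n := by
        rw [sum_sub_apply_eq_sum_erase]
    _ ≤ ∑ j ∈ Finset.univ.erase i, (1 / n : ℝ) + 1 / n := by
        gcongr with j; exact (hδ j).apply_le x
    _ = 1 := by
        rw [Finset.sum_erase_add _ _ (Finset.mem_univ i), Finset.sum_const, Finset.card_univ,
          Fintype.card_fin, nsmul_eq_mul]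
        field_simp

end Profile

def IsStrictArgmaxSelection {ι α β : Type*} [LT β] (A : ι → Finset α) (s : α → β) (f : ι → α) :
    Prop :=
  ∀ i, f i ∈ A i ∧ ∀ b ∈ A i, b ≠ f i → s b < s (f i)

theorem IsStrictArgmaxSelection.eq_of_monotone_comp {ι α β : Type*} [LinearOrder α] [Preorder β]
    {A : ι → Finset α} {s s' : α → β} {f f' : ι → α} (hf : IsStrictArgmaxSelection A s f)
    (hf' : IsStrictArgmaxSelection A s' f') {σ : Equiv.Perm α} (hs : Monotone (s ∘ σ))
    (hs' : Monotone (s' ∘ σ)) : f = f' := by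
  funext i
  by_contra hne
  have h₁ : σ.symm (f' i) < σ.symm (f i) :=
    hs.reflect_lt (by simpa using (hf i).2 (f' i) (hf' i).1 (Ne.symm hne))
  have h₂ : σ.symm (f i) < σ.symm (f' i) :=
    hs'.reflect_lt (by simpa using (hf' i).2 (f i) (hf i).1 hne)
  exact lt_asymm h₁ h₂

theorem IsNash.exists_eq_single {n m : ℕ} {A : Fin n → Finset (Fin m)}
    {g : Fin n → ℝ → ℝ} {δ : Fin n → Fin m → ℝ}
    (h : IsNash n m (fun i d => ∑ x ∈ A i, g i (d x)) δ) (hn : 0 < n) (hA : ∀ i, (A i).Nonempty)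
    (hconv : ∀ i, StrictConvexOn ℝ (Set.Icc 0 1) (g i))
    (hmono : ∀ i, StrictMonoOn (g i) (Set.Icc 0 1)) :
    ∃ f : Fin n → Fin m,
      δ = (fun i => Pi.single (f i) (1 / n : ℝ)) ∧ IsStrictArgmaxSelection A (∑ j, δ j) f := by
  have hbr i := ((h.isBestResponse i).exists_eq_single hn (hA i) (hconv i) (hmono i)
    (sum_sub_apply_nonneg h.1 i) (sum_sub_apply_add_le_one h.1 i))
  choose f hfA hfδ hfmax using hbr
  refine ⟨f, funext hfδ, fun i => ⟨hfA i, fun b hb hbi => ?_⟩⟩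
  simpa only [sub_add_cancel] using hfmax i b hb hbi

theorem convex_case_nash_count_bound_general
    (n m : ℕ) (hn : 0 < n)
    (A : Fin n → Finset (Fin m)) (hA : ∀ i, (A i).Nonempty)
    (g : Fin n → ℝ → ℝ)
    (hconv : ∀ i, StrictConvexOn ℝ (Set.Icc (0 : ℝ) 1) (g i))
    (hmono : ∀ i, StrictMonoOn (g i) (Set.Icc (0 : ℝ) 1)) :
    {δ : Fin n → Fin m → ℝ |
        IsNash n m (fun i d => ∑ x ∈ A i, g i (d x)) δ}.Finite ∧
    {δ : Fin n → Fin m → ℝ |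
        IsNash n m (fun i d => ∑ x ∈ A i, g i (d x)) δ}.ncard ≤
      min (Nat.factorial m) (∏ i, (A i).card) := by
  set S := {δ : Fin n → Fin m → ℝ | IsNash n m (fun i d => ∑ x ∈ A i, g i (d x)) δ}
  have hchar (δ) (hδ : δ ∈ S) := IsNash.exists_eq_single hδ hn hA hconv hmono
  have hsub :
      S ⊆ (fun (f : Fin n → Fin m) i => Pi.single (f i) (1 / n : ℝ)) '' Fintype.piFinset A := by
    intro δ hδ
    obtain ⟨f, rfl, hf⟩ := hchar δ hδ
    exact ⟨f, Fintype.mem_piFinset.2 fun i => (hf i).1, rfl⟩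
  have hinj : S.InjOn fun δ => Tuple.sort (∑ j, δ j) := by
    intro δ hδ δ' hδ' (hσ : Tuple.sort (∑ j, δ j) = Tuple.sort (∑ j, δ' j))
    obtain ⟨f, hδf, hf⟩ := hchar δ hδ
    obtain ⟨f', hδf', hf'⟩ := hchar δ' hδ'
    rw [hδf, hδf',
      hf.eq_of_monotone_comp hf' (Tuple.monotone_sort _) (hσ ▸ Tuple.monotone_sort _)]
  refine ⟨((Fintype.piFinset A).finite_toSet.image _).subset hsub, le_min ?_ ?_⟩
  · calc S.ncard ≤ (Set.univ : Set (Equiv.Perm (Fin m))).ncard :=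
          Set.ncard_le_ncard_of_injOn _ (fun _ _ => Set.mem_univ _) hinj
      _ = m.factorial := by simp [Set.ncard_univ, Fintype.card_perm]
  · calc S.ncard ≤ (Fintype.piFinset A : Set (Fin n → Fin m)).ncard :=
          (Set.ncard_le_ncard hsub ((Finset.finite_toSet _).image _)).trans
            (Set.ncard_image_le (Finset.finite_toSet _))
      _ = ∏ i, (A i).card := by rw [Set.ncard_coe_finset, Fintype.card_piFinset]

/-- with binary symmetric separable strictly convex utilities,
there are finitely many Nash equilibria, and their number is at most
`min(m!, ∏ᵢ |Aᵢ|)`. -/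
theorem convex_case_nash_count_bound
    (n m : ℕ) (hn : 0 < n)
    (A : Fin n → Finset (Fin m)) (hA : ∀ i, (A i).Nonempty)
    (g : Fin n → ℝ → ℝ)
    (hcont : ∀ i, Continuous (g i))
    (hconv : ∀ i, StrictConvexOn ℝ (Set.Icc (0 : ℝ) 1) (g i))
    (hmono : ∀ i, StrictMonoOn (g i) (Set.Icc (0 : ℝ) 1)) :
    {δ : Fin n → Fin m → ℝ |
        IsNash n m (fun i d => ∑ x ∈ A i, g i (d x)) δ}.Finite ∧
    {δ : Fin n → Fin m → ℝ |
        IsNash n m (fun i d => ∑ x ∈ A i, g i (d x)) δ}.ncard ≤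
      min (Nat.factorial m) (∏ i, (A i).card) :=
  convex_case_nash_count_bound_general n m hn A hA g hconv hmono
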